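/- Under Assumption 1, the composed controller C_c (defined from the maximal safety controllers C_σ^* of the subsystems S_σ) is a safety controller for the composed abstraction S_c and the safe set X_c^0. -/

import Mathlib

open Set Function

/-- `ℝⁿ` modeled as `Fin n → ℝ`. -/
abbrev Vec (n : ℕ) : Type := Fin n → ℝ

/-- Projection `π_{I'}` of a dependent tuple onto the components with indices in `I'`. -/
def proj {ι : Type*} (E : ι → Type*) (I' : Set ι) (x : (i : ι) → E i) : (i : I') → E i.1 :=
  fun i => x i.1

/-- `P` is a finite partition of `A`: finitely many nonempty pairwise disjoint cells covering `A`. -/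
def IsFinPartition {α : Type*} (P : Set (Set α)) (A : Set α) : Prop :=
  P.Finite ∧ (∀ s ∈ P, s.Nonempty) ∧ ⋃₀ P = A ∧
    ∀ s ∈ P, ∀ t ∈ P, s ≠ t → Disjoint s t

/-- The family `A : τ → Set α` is a partition of the index type `α`. -/
def IsIndexPartition {τ α : Type*} (A : τ → Set α) : Prop :=
  (⋃ σ, A σ) = Set.univ ∧ Pairwise (Disjoint on A)

/-- The set `𝒫` of cells `s₁ × ⋯ × s_n̄`, `s_i ∈ 𝒫_i`, of the product partition. -/
def cells {ι : Type*} {E : ι → Type*} (P : (i : ι) → Set (Set (E i))) :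
    Set (Set ((i : ι) → E i)) :=
  { s | ∃ f : (i : ι) → Set (E i), (∀ i, f i ∈ P i) ∧ s = Set.pi Set.univ f }

/-- The set `X_σ⁰` of cells `∏_{i ∈ I'} s_i`, `s_i ∈ 𝒫_i`, of the partition restricted to `I'`. -/
def cellsOn {ι : Type*} {E : ι → Type*} (P : (i : ι) → Set (Set (E i))) (I' : Set ι) :
    Set (Set ((i : I') → E i.1)) :=
  { s | ∃ f : (i : ι) → Set (E i), (∀ i, f i ∈ P i) ∧
        s = Set.pi Set.univ (fun i : I' => f i.1) }

/-- `F(𝒳',𝒰') = ⋃_{x ∈ 𝒳', u ∈ 𝒰'} F(x,u)`. -/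
def Fset {X U : Type*} (F : X → U → Set X) (A : Set X) (B : Set U) : Set X :=
  ⋃ x ∈ A, ⋃ u ∈ B, F x u

/-- `Φ_σ(s_σ,u_σ) = F̄(𝒳 ∩ π_{I_σ}⁻¹(s_σ), 𝒰 ∩ π_{J_σ}⁻¹({u_σ}))`. -/
def Phi {ι κ : Type*} (E : ι → Type*) (Fu : κ → Type*)
    (Fbar : Set ((i : ι) → E i) → Set ((j : κ) → Fu j) → Set ((i : ι) → E i))
    (Xset : Set ((i : ι) → E i)) (Uset : Set ((j : κ) → Fu j))
    (Iσ : Set ι) (Jσ : Set κ)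
    (sσ : Set ((i : Iσ) → E i.1)) (uσ : (j : Jσ) → Fu j.1) : Set ((i : ι) → E i) :=
  Fbar (Xset ∩ proj E Iσ ⁻¹' sσ) (Uset ∩ proj Fu Jσ ⁻¹' {uσ})

/-- `Out_σ = π_{I_σ}(ℝⁿ) \ 𝒳_{I_σ}`. -/
def OutOf {ι : Type*} (E : ι → Type*) (Iσ : Set ι) (Xset : Set ((i : ι) → E i)) :
    Set ((i : Iσ) → E i.1) :=
  proj E Iσ '' Set.univ \ proj E Iσ '' Xset

/-- Transition map `δ_σ` of the symbolic subsystem `S_σ`. -/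
def deltaSub {ι κ : Type*} (E : ι → Type*) (Fu : κ → Type*)
    (Fbar : Set ((i : ι) → E i) → Set ((j : κ) → Fu j) → Set ((i : ι) → E i))
    (Xset : Set ((i : ι) → E i)) (Uset : Set ((j : κ) → Fu j))
    (P : (i : ι) → Set (Set (E i))) (V : (j : κ) → Set (Fu j))
    (Iσ Icσ : Set ι) (Jσ : Set κ)
    (sσ : Set ((i : Iσ) → E i.1)) (uσ : (j : Jσ) → Fu j.1) :
    Set (Set ((i : Iσ) → E i.1)) :=
  { s' | sσ ∈ cellsOn P Iσ ∧ uσ ∈ Set.pi Set.univ (fun j : Jσ => V j.1) ∧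
      ((s' ∈ cellsOn P Iσ ∧
          (s' ∩ proj E Iσ '' Phi E Fu Fbar Xset Uset Iσ Jσ sσ uσ).Nonempty) ∨
        (s' = OutOf E Iσ Xset ∧
          (proj E Iσ '' Phi E Fu Fbar Xset Uset Iσ Jσ sσ uσ ∩ proj E Iσ '' Xset = ∅ ∨
            ¬proj E Icσ '' Phi E Fu Fbar Xset Uset Iσ Jσ sσ uσ ⊆ proj E Icσ '' Xset))) }

/-- Transition map `δ_c` of the composed abstraction `S_c`. -/
def deltaC {ι κ τ : Type*} (E : ι → Type*) (Fu : κ → Type*)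
    (Fbar : Set ((i : ι) → E i) → Set ((j : κ) → Fu j) → Set ((i : ι) → E i))
    (Xset : Set ((i : ι) → E i)) (Uset : Set ((j : κ) → Fu j))
    (P : (i : ι) → Set (Set (E i))) (V : (j : κ) → Set (Fu j))
    (Im Ic : τ → Set ι) (Jm : τ → Set κ)
    (s : Set ((i : ι) → E i)) (u : (j : κ) → Fu j) :
    Set (Set ((i : ι) → E i)) :=
  { s' | s ∈ cells P ∧ u ∈ Set.pi Set.univ V ∧
      ((s' ∈ cells P ∧ ∀ σ : τ,
          proj E (Im σ) '' s' ∈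
            deltaSub E Fu Fbar Xset Uset P V (Im σ) (Ic σ) (Jm σ)
              (proj E (Im σ) '' s) (proj Fu (Jm σ) u)) ∨
        (s' = Xsetᶜ ∧ ∃ σ : τ,
          OutOf E (Im σ) Xset ∈
            deltaSub E Fu Fbar Xset Uset P V (Im σ) (Ic σ) (Jm σ)
              (proj E (Im σ) '' s) (proj Fu (Jm σ) u))) }

/-- Safety controller for the transition map `δ` and the safe set `safe`. -/
def IsSafetyController {X U : Type*} (δ : X → U → Set X) (safe : Set X) (C : X → Set U) : Prop :=
  (∀ x, ∀ u ∈ C x, (δ x u).Nonempty) ∧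
  (∀ x, (C x).Nonempty → x ∈ safe) ∧
  (∀ x, ∀ u ∈ C x, ∀ x', x' ∈ δ x u → (C x').Nonempty)

/-- Maximal safety controller. -/
def IsMaximalSafetyController {X U : Type*} (δ : X → U → Set X) (safe : Set X)
    (Cstar : X → Set U) : Prop :=
  IsSafetyController δ safe Cstar ∧
    ∀ C, IsSafetyController δ safe C → ∀ x, C x ⊆ Cstar x

/-- Feedback refinement relation (over a common input type). -/
def IsFeedbackRefinement {Xa Xb U : Type*} (δa : Xa → U → Set Xa) (δb : Xb → U → Set Xb)
    (H : Xa → Xb) : Prop :=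
  ∀ xa : Xa,
    (∀ u, (δb (H xa) u).Nonempty → (δa xa u).Nonempty) ∧
    (∀ u, (δb (H xa) u).Nonempty → H '' δa xa u ⊆ δb (H xa) u)

/-- Concrete transition map of `S = (ℝⁿ, 𝒰, F)` (inputs restricted to `𝒰`). -/
def deltaConc {X U : Type*} (F : X → U → Set X) (Uset : Set U) (x : X) (u : U) : Set X :=
  { x' | u ∈ Uset ∧ x' ∈ F x u }

/-!
A state `s'` reached in the composed abstraction projects, for every `σ`, onto a successor of
`s_{I_σ}` in `S_σ` under an input allowed by `C_σ^*`; such successors lie in the domain of `C_σ^*`,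
so `s'` cannot be `Out` (no `Out_σ` is a cell) and each projection of `s'` admits some input
`v_σ ∈ C_σ^*(s'_{I_σ})`. Since the `J_σ` partition the input indices, the `v_σ` glue to one input
in `C_c(s')`. Nonemptiness of `δ_c(s,u)` comes from the concrete dynamics: a successor `x' ∈ F(x,u)`
of a point `x ∈ s` lies in every `Φ_σ`, so either its cell is a successor of `s`, or some
coordinate of `x'` leaves `𝒳`, and the subsystem `σ` whose `I_σ^c` contains it reports `Out_σ`.
-/

section Projection

variable {ι : Type*} {E : ι → Type*}

lemma proj_image_univ_pi (I' : Set ι) {f : (i : ι) → Set (E i)} (hf : ∀ i, (f i).Nonempty) :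
    proj E I' '' pi univ f = pi univ (fun i : I' => f i.1) := by
  classical
  ext y
  constructor
  · rintro ⟨x, hx, rfl⟩ i _
    exact hx i.1 trivial
  · intro hy
    refine ⟨fun i => if h : i ∈ I' then y ⟨i, h⟩ else (hf i).some, fun i _ => ?_, ?_⟩
    · by_cases h : i ∈ I'
      · simpa only [dif_pos h] using hy ⟨i, h⟩ trivial
      · simpa only [dif_neg h] using (hf i).some_mem
    · funext i
      simp only [proj, dif_pos i.2]

lemma proj_notMem_image_univ_pi {I' : Set ι} {X : (i : ι) → Set (E i)} {x : (i : ι) → E i}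
    {i : ι} (hi : i ∈ I') (hx : x i ∉ X i) : proj E I' x ∉ proj E I' '' pi univ X := by
  rintro ⟨y, hy, hyx⟩
  have hyi : y i = x i := congr_fun hyx ⟨i, hi⟩
  exact hx (hyi ▸ hy i trivial)

lemma IsIndexPartition.exists_proj_eq {κ τ : Type*} {Fu : κ → Type*} {Jm : τ → Set κ}
    (hJ : IsIndexPartition Jm) (V : (j : κ) → Set (Fu j)) (v : (σ : τ) → (j : Jm σ) → Fu j.1)
    (hv : ∀ σ, v σ ∈ pi univ (fun j : Jm σ => V j.1)) :
    ∃ u ∈ pi univ V, ∀ σ, proj Fu (Jm σ) u = v σ := by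
  have hcover : ∀ j, ∃ σ, j ∈ Jm σ := fun j => mem_iUnion.1 (hJ.1 ▸ mem_univ j)
  choose σj hσj using hcover
  have hunique : ∀ σ j (h : j ∈ Jm σ), σj j = σ := fun σ j h =>
    by_contra fun hne => disjoint_left.1 (hJ.2 hne) (hσj j) h
  refine ⟨fun j => v (σj j) ⟨j, hσj j⟩, fun j _ => hv (σj j) ⟨j, hσj j⟩ trivial, fun σ => ?_⟩
  funext ⟨j, h⟩
  obtain rfl := hunique σ j h
  rfl

end Projection

section Partition

variable {α : Type*} {P : Set (Set α)} {A : Set α}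

lemma IsFinPartition.subset_of_mem (hP : IsFinPartition P A) {s : Set α} (hs : s ∈ P) :
    s ⊆ A :=
  hP.2.2.1 ▸ subset_sUnion_of_mem hs

lemma IsFinPartition.exists_mem_of_mem (hP : IsFinPartition P A) {a : α} (ha : a ∈ A) :
    ∃ s ∈ P, a ∈ s :=
  mem_sUnion.1 (hP.2.2.1 ▸ ha)

end Partition

section Cells

variable {ι : Type*} {E : ι → Type*} {P : (i : ι) → Set (Set (E i))} {X : (i : ι) → Set (E i)}

lemma nonempty_of_mem_cells (hP : ∀ i, IsFinPartition (P i) (X i)) {s : Set ((i : ι) → E i)}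
    (hs : s ∈ cells P) : s.Nonempty := by
  obtain ⟨f, hf, rfl⟩ := hs
  exact univ_pi_nonempty_iff.2 fun i => (hP i).2.1 _ (hf i)

lemma subset_univ_pi_of_mem_cells (hP : ∀ i, IsFinPartition (P i) (X i))
    {s : Set ((i : ι) → E i)} (hs : s ∈ cells P) : s ⊆ pi univ X := by
  obtain ⟨f, hf, rfl⟩ := hs
  exact pi_mono fun i _ => (hP i).subset_of_mem (hf i)

lemma proj_image_mem_cellsOn (hP : ∀ i, IsFinPartition (P i) (X i)) {s : Set ((i : ι) → E i)}
    (hs : s ∈ cells P) (I' : Set ι) : proj E I' '' s ∈ cellsOn P I' := by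
  obtain ⟨f, hf, rfl⟩ := hs
  exact ⟨f, hf, proj_image_univ_pi I' fun i => (hP i).2.1 _ (hf i)⟩

lemma exists_mem_cells_of_mem (hP : ∀ i, IsFinPartition (P i) (X i)) {x : (i : ι) → E i}
    (hx : x ∈ pi univ X) : ∃ s ∈ cells P, x ∈ s := by
  choose f hf hxf using fun i => (hP i).exists_mem_of_mem (hx i trivial)
  exact ⟨pi univ f, ⟨f, hf, rfl⟩, fun i _ => hxf i⟩

lemma outOf_notMem_cellsOn (hP : ∀ i, IsFinPartition (P i) (X i)) (I' : Set ι) :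
    OutOf E I' (pi univ X) ∉ cellsOn P I' := by
  rintro ⟨f, hf, hOut⟩
  have hcell : pi univ f ∈ cells P := ⟨f, hf, rfl⟩
  rw [← proj_image_univ_pi I' fun i => (hP i).2.1 _ (hf i)] at hOut
  obtain ⟨y, hy⟩ := (nonempty_of_mem_cells hP hcell).image (proj E I')
  rw [← hOut] at hy
  exact hy.2 (image_mono (subset_univ_pi_of_mem_cells hP hcell) (hOut ▸ hy))

end Cells

lemma IsSafetyController.mem_safe {X U : Type*} {δ : X → U → Set X} {safe : Set X}
    {C : X → Set U} (hC : IsSafetyController δ safe C) {x x' : X} {u : U} (hu : u ∈ C x)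
    (hx' : x' ∈ δ x u) : x' ∈ safe :=
  hC.2.1 x' (hC.2.2 x u hu x' hx')

section Composition

variable {ι κ τ : Type*} {E : ι → Type*} {Fu : κ → Type*}
  {F : ((i : ι) → E i) → ((j : κ) → Fu j) → Set ((i : ι) → E i)}
  {Fbar : Set ((i : ι) → E i) → Set ((j : κ) → Fu j) → Set ((i : ι) → E i)}
  {X : (i : ι) → Set (E i)} {U : (j : κ) → Set (Fu j)}
  {P : (i : ι) → Set (Set (E i))} {V : (j : κ) → Set (Fu j)}
  {Im Ic : τ → Set ι} {Jm : τ → Set κ}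

lemma mem_phi_of_mem (hFbar : ∀ A B, Fset F A B ⊆ Fbar A B) {I' : Set ι} {J' : Set κ}
    {sσ : Set ((i : I') → E i.1)} {x x' : (i : ι) → E i} {u : (j : κ) → Fu j}
    (hx : x ∈ pi univ X) (hxs : proj E I' x ∈ sσ) (hu : u ∈ pi univ U) (hx' : x' ∈ F x u) :
    x' ∈ Phi E Fu Fbar (pi univ X) (pi univ U) I' J' sσ (proj Fu J' u) :=
  hFbar _ _ <| mem_biUnion (x := x) ⟨hx, hxs⟩ <| mem_biUnion (x := u) ⟨hu, rfl⟩ hx'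

theorem deltaC_nonempty (hF : ∀ x u, u ∈ pi univ U → (F x u).Nonempty)
    (hFbar : ∀ A B, Fset F A B ⊆ Fbar A B) (hP : ∀ i, IsFinPartition (P i) (X i))
    (hV : ∀ j, V j ⊆ U j) (hIc : ⋃ σ, Ic σ = univ) {s : Set ((i : ι) → E i)}
    (hs : s ∈ cells P) {u : (j : κ) → Fu j} (hu : u ∈ pi univ V) :
    (deltaC E Fu Fbar (pi univ X) (pi univ U) P V Im Ic Jm s u).Nonempty := by
  obtain ⟨x, hx⟩ := nonempty_of_mem_cells hP hs
  have huU : u ∈ pi univ U := pi_mono (fun j _ => hV j) hu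
  obtain ⟨x', hx'⟩ := hF x u huU
  have hΦ : ∀ σ, x' ∈ Phi E Fu Fbar (pi univ X) (pi univ U) (Im σ) (Jm σ)
      (proj E (Im σ) '' s) (proj Fu (Jm σ) u) := fun σ =>
    mem_phi_of_mem hFbar (subset_univ_pi_of_mem_cells hP hs hx) (mem_image_of_mem _ hx) huU hx'
  have huσ : ∀ J' : Set κ, proj Fu J' u ∈ pi univ (fun j : J' => V j.1) :=
    fun _ j _ => hu j.1 trivial
  by_cases hx'X : x' ∈ pi univ X
  · obtain ⟨s', hs', hx's'⟩ := exists_mem_cells_of_mem hP hx'X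
    refine ⟨s', hs, hu, Or.inl ⟨hs', fun σ => ⟨proj_image_mem_cellsOn hP hs _, huσ _, ?_⟩⟩⟩
    exact Or.inl ⟨proj_image_mem_cellsOn hP hs' _, _,
      mem_image_of_mem _ hx's', mem_image_of_mem _ (hΦ σ)⟩
  · obtain ⟨i, hi⟩ : ∃ i, x' i ∉ X i := by simpa [mem_univ_pi] using hx'X
    obtain ⟨σ, hσ⟩ := mem_iUnion.1 (hIc ▸ mem_univ i)
    refine ⟨(pi univ X)ᶜ, hs, hu, Or.inr ⟨rfl, σ, proj_image_mem_cellsOn hP hs _, huσ _, ?_⟩⟩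
    exact Or.inr ⟨rfl, Or.inr fun hsub =>
      proj_notMem_image_univ_pi hσ hi (hsub (mem_image_of_mem _ (hΦ σ)))⟩

variable {Cstar : (σ : τ) → Set ((i : Im σ) → E i.1) → Set ((j : Jm σ) → Fu j.1)}

theorem exists_input_of_mem_deltaC (hP : ∀ i, IsFinPartition (P i) (X i))
    (hJ : IsIndexPartition Jm)
    (hCstar : ∀ σ, IsSafetyController (deltaSub E Fu Fbar (pi univ X) (pi univ U) P V
      (Im σ) (Ic σ) (Jm σ)) (cellsOn P (Im σ)) (Cstar σ))
    {s s' : Set ((i : ι) → E i)} {u : (j : κ) → Fu j}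
    (hu : ∀ σ, proj Fu (Jm σ) u ∈ Cstar σ (proj E (Im σ) '' s))
    (hs' : s' ∈ deltaC E Fu Fbar (pi univ X) (pi univ U) P V Im Ic Jm s u) :
    s' ∈ cells P ∧ ∃ u' ∈ pi univ V, ∀ σ, proj Fu (Jm σ) u' ∈ Cstar σ (proj E (Im σ) '' s') := by
  obtain ⟨-, -, ⟨hs'P, hδ⟩ | ⟨-, σ, hOut⟩⟩ := hs'
  · choose v hv using fun σ => (hCstar σ).2.2 _ _ (hu σ) _ (hδ σ)
    have hvV : ∀ σ, v σ ∈ pi univ (fun j : Jm σ => V j.1) := fun σ =>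
      ((hCstar σ).1 _ _ (hv σ)).some_mem.2.1
    obtain ⟨u', hu'V, hu'⟩ := hJ.exists_proj_eq V v hvV
    exact ⟨hs'P, u', hu'V, fun σ => hu' σ ▸ hv σ⟩
  · exact absurd ((hCstar σ).mem_safe (hu σ) hOut) (outOf_notMem_cellsOn hP _)

end Composition

theorem stmt3_general
    {ι κ τ : Type*}
    (nd : ι → ℕ) (pd : κ → ℕ)
    (𝒳i : (i : ι) → Set (Vec (nd i))) (𝒰j : (j : κ) → Set (Vec (pd j)))
    (F : ((i : ι) → Vec (nd i)) → ((j : κ) → Vec (pd j)) → Set ((i : ι) → Vec (nd i)))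
    (Fbar : Set ((i : ι) → Vec (nd i)) → Set ((j : κ) → Vec (pd j)) →
      Set ((i : ι) → Vec (nd i)))
    (P : (i : ι) → Set (Set (Vec (nd i)))) (V : (j : κ) → Set (Vec (pd j)))
    (Im Ic : τ → Set ι) (Jm : τ → Set κ)
    (hF : ∀ x u, u ∈ Set.pi Set.univ 𝒰j → (F x u).Nonempty)
    (hFbar : ∀ A B, Fset F A B ⊆ Fbar A B)
    (hP : ∀ i, IsFinPartition (P i) (𝒳i i))
    (hV : ∀ j, (V j).Finite ∧ V j ⊆ 𝒰j j)
    (hIc : IsIndexPartition Ic)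
    (hJ : IsIndexPartition Jm)
    (Cstar : (σ : τ) → Set ((i : Im σ) → Vec (nd i.1)) → Set ((j : Jm σ) → Vec (pd j.1)))
    (hCstar : ∀ σ, IsMaximalSafetyController
      (deltaSub (fun i => Vec (nd i)) (fun j => Vec (pd j)) Fbar (Set.pi Set.univ 𝒳i) (Set.pi Set.univ 𝒰j) P V (Im σ) (Ic σ) (Jm σ)) (cellsOn P (Im σ)) (Cstar σ))
    (Cc : Set ((i : ι) → Vec (nd i)) → Set ((j : κ) → Vec (pd j)))
    (hCc : ∀ s ∈ cells P, Cc s =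
      {u | u ∈ Set.pi Set.univ V ∧ ∀ σ, proj (fun j => Vec (pd j)) (Jm σ) u ∈ Cstar σ (proj (fun i => Vec (nd i)) (Im σ) '' s)})
    (hCcOut : ∀ s ∉ cells P, Cc s = ∅) :
    IsSafetyController (deltaC (fun i => Vec (nd i)) (fun j => Vec (pd j)) Fbar (Set.pi Set.univ 𝒳i) (Set.pi Set.univ 𝒰j) P V Im Ic Jm) (cells P) Cc := by
  have hdom : ∀ s, (Cc s).Nonempty → s ∈ cells P := fun s hs =>
    by_contra fun h => (hCcOut s h ▸ hs).ne_empty rfl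
  refine ⟨fun s u hu => ?_, hdom, fun s u hu s' hs' => ?_⟩
  · have hs := hdom s ⟨u, hu⟩
    rw [hCc s hs] at hu
    exact deltaC_nonempty hF hFbar hP (fun j => (hV j).2) hIc.1 hs hu.1
  · rw [hCc s (hdom s ⟨u, hu⟩)] at hu
    obtain ⟨hs'P, u', hu'⟩ := exists_input_of_mem_deltaC hP hJ (fun σ => (hCstar σ).1) hu.2 hs'
    rw [hCc s' hs'P]
    exact ⟨u', hu'⟩

theorem stmt3
    {ι κ τ : Type*} [Finite ι] [Finite κ] [Finite τ]
    (nd : ι → ℕ) (pd : κ → ℕ)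
    (𝒳i : (i : ι) → Set (Vec (nd i))) (𝒰j : (j : κ) → Set (Vec (pd j)))
    (F : ((i : ι) → Vec (nd i)) → ((j : κ) → Vec (pd j)) → Set ((i : ι) → Vec (nd i)))
    (Fbar : Set ((i : ι) → Vec (nd i)) → Set ((j : κ) → Vec (pd j)) →
      Set ((i : ι) → Vec (nd i)))
    (P : (i : ι) → Set (Set (Vec (nd i)))) (V : (j : κ) → Set (Vec (pd j)))
    (Im Ic : τ → Set ι) (Jm : τ → Set κ)
    (hF : ∀ x u, u ∈ Set.pi Set.univ 𝒰j → (F x u).Nonempty)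
    (hFbar : ∀ A B, Fset F A B ⊆ Fbar A B)
    (hP : ∀ i, IsFinPartition (P i) (𝒳i i))
    (hV : ∀ j, (V j).Finite ∧ V j ⊆ 𝒰j j)
    (hIc : IsIndexPartition Ic) (hIcne : ∀ σ, (Ic σ).Nonempty) (hIcIm : ∀ σ, Ic σ ⊆ Im σ)
    (hJ : IsIndexPartition Jm) (hJne : ∀ σ, (Jm σ).Nonempty)
    (Cstar : (σ : τ) → Set ((i : Im σ) → Vec (nd i.1)) → Set ((j : Jm σ) → Vec (pd j.1)))
    (hCstar : ∀ σ, IsMaximalSafetyController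
      (deltaSub (fun i => Vec (nd i)) (fun j => Vec (pd j)) Fbar (Set.pi Set.univ 𝒳i) (Set.pi Set.univ 𝒰j) P V (Im σ) (Ic σ) (Jm σ)) (cellsOn P (Im σ)) (Cstar σ))
    (Cc : Set ((i : ι) → Vec (nd i)) → Set ((j : κ) → Vec (pd j)))
    (hCc : ∀ s ∈ cells P, Cc s =
      {u | u ∈ Set.pi Set.univ V ∧ ∀ σ, proj (fun j => Vec (pd j)) (Jm σ) u ∈ Cstar σ (proj (fun i => Vec (nd i)) (Im σ) '' s)})
    (hCcOut : ∀ s ∉ cells P, Cc s = ∅) :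
    IsSafetyController (deltaC (fun i => Vec (nd i)) (fun j => Vec (pd j)) Fbar (Set.pi Set.univ 𝒳i) (Set.pi Set.univ 𝒰j) P V Im Ic Jm) (cells P) Cc :=
  stmt3_general nd pd 𝒳i 𝒰j F Fbar P V Im Ic Jm hF hFbar hP hV hIc hJ Cstar hCstar Cc hCc hCcOut
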